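/- (Second hypergeometric representation for q(G) = G^l, continuous case.) Let P_n = Σ_{j=0}^n (G^l)^j(x^n)/j! and write n = ml + i with 0 ≤ i ≤ l−1. Assume no element of Ŝ(i) is a nonpositive integer. Then P_{ml+i}(x) = η^{ml} · x^i · [∏_{β∈I} (S_β(i))_m] · Σ_{j=0}^m [(−m)_j / (∏_{β∈I} (S_β(i))_j · j!)] · (−(x/η)^l)^j. -/

import Mathlib

open Polynomial

/-- Pochhammer symbol `(a)_j = a(a+1)⋯(a+j−1)`. -/
noncomputable def poch (a : ℂ) (j : ℕ) : ℂ := ∏ s ∈ Finset.range j, (a + s)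

/-- The derivative operator `∂` on `ℂ[x]`. -/
noncomputable def Dop : Module.End ℂ (Polynomial ℂ) := Polynomial.derivative

/-- Multiplication by `x` on `ℂ[x]`. -/
noncomputable def Xop : Module.End ℂ (Polynomial ℂ) := LinearMap.mulLeft ℂ Polynomial.X

/-- `H = x∂`. -/
noncomputable def Hop : Module.End ℂ (Polynomial ℂ) := Xop * Dop

/-- `G = R(H)∘∂` with `R(H) = ρ·∏_{k=1}^d (H + α_k + 1)`. -/
noncomputable def Gop (d : ℕ) (α : ℕ → ℂ) (ρ : ℂ) : Module.End ℂ (Polynomial ℂ) :=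
  (Polynomial.aeval Hop
    (Polynomial.C ρ * ∏ k ∈ Finset.range d, (Polynomial.X + Polynomial.C (α k + 1)))) * Dop

/-!
`G` acts diagonally on monomials: `G x^(n+1) = ρ (n+1) ∏_k (n+1+α_k) x^n`. In one application of
`G^l` to `x^(l(s+1)+i)` the factors are `l(s+1) + i - r + α_k` for `0 ≤ r < l`, i.e.
`l (S_{k,r}(i) + s)`, so `(G^l)^t x^(l(a+t)+i) = η^(lt) ∏_β (S_β(i) + a)_t x^(la+i)`, the product
running over all of `S(i)`. The element `1 ∈ S(i)` contributes `m!/j!`, and the remaining comparison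
with the hypergeometric side is the identity `(-m)_j = (-1)^j m!/(m-j)!`.
-/

open Finset
open scoped Nat

section Operators

variable (d : ℕ) (α : ℕ → ℂ) (ρ : ℂ)

lemma Hop_X_pow (n : ℕ) : Hop ((X : ℂ[X]) ^ n) = (n : ℂ) • X ^ n := by
  cases n with
  | zero => simp [Hop, Dop]
  | succ n =>
    simp only [Hop, Dop, Xop, Module.End.mul_apply, LinearMap.mulLeft_apply, derivative_X_pow,
      smul_eq_C_mul]
    push_cast
    ring

lemma Dop_X_pow_succ (n : ℕ) : Dop ((X : ℂ[X]) ^ (n + 1)) = ((n : ℂ) + 1) • X ^ n := by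
  simp [Dop, smul_eq_C_mul]

/-- `α_1, …, α_d` together with `α_{d+1} = 0`, zero-based: index `k < d` is `α_{k+1}`. -/
def alphaExt (k : ℕ) : ℂ := if k < d then α k else 0

noncomputable def gCoeff (n : ℕ) : ℂ := ρ * ∏ k ∈ range (d + 1), ((n : ℂ) + alphaExt d α k)

lemma Gop_one : Gop d α ρ 1 = 0 := by
  simp [Gop, Dop]

lemma Gop_X_pow_succ (n : ℕ) :
    Gop d α ρ ((X : ℂ[X]) ^ (n + 1)) = gCoeff d α ρ (n + 1) • X ^ n := by
  have hH : Hop.HasEigenvector (n : ℂ) ((X : ℂ[X]) ^ n) :=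
    ⟨Module.End.mem_eigenspace_iff.mpr (Hop_X_pow n), pow_ne_zero n X_ne_zero⟩
  rw [Gop, Module.End.mul_apply, Dop_X_pow_succ, map_smul,
    Module.End.aeval_apply_of_hasEigenvector hH, smul_smul]
  congr 1
  have hA : ∀ k ∈ range d, ((n + 1 : ℕ) : ℂ) + alphaExt d α k = n + (α k + 1) := fun k hk => by
    rw [alphaExt, if_pos (mem_range.mp hk)]
    push_cast
    ring
  rw [gCoeff, prod_range_succ, prod_congr rfl hA, alphaExt, if_neg (lt_irrefl d)]
  simp only [eval_mul, eval_C, eval_prod, eval_add, eval_X]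
  push_cast
  ring

lemma Gop_pow_X_pow_add (n t : ℕ) :
    (Gop d α ρ ^ t) ((X : ℂ[X]) ^ (n + t)) =
      (∏ u ∈ range t, gCoeff d α ρ (n + 1 + u)) • X ^ n := by
  induction t with
  | zero => simp
  | succ t ih =>
    rw [pow_succ, Module.End.mul_apply, ← add_assoc, Gop_X_pow_succ, map_smul, ih, smul_smul,
      prod_range_succ, mul_comm, add_right_comm]

lemma Gop_pow_X_pow_of_lt {n t : ℕ} (h : n < t) : (Gop d α ρ ^ t) ((X : ℂ[X]) ^ n) = 0 := by
  obtain ⟨s, rfl⟩ := Nat.exists_eq_add_of_lt h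
  have h0 := Gop_pow_X_pow_add d α ρ 0 n
  rw [zero_add] at h0
  rw [add_assoc, add_comm, pow_add, Module.End.mul_apply, h0, pow_zero, map_smul, pow_succ,
    Module.End.mul_apply, Gop_one, map_zero, smul_zero]

end Operators

section Pochhammer

lemma poch_add (a : ℂ) (j t : ℕ) : poch a (j + t) = poch a j * poch (a + j) t := by
  rw [poch, poch, poch, prod_range_add]
  congr 1
  refine prod_congr rfl fun s _ => ?_
  push_cast
  ring

lemma poch_succ (a : ℂ) (t : ℕ) : poch a (t + 1) = poch a t * (a + t) :=
  prod_range_succ _ _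

lemma poch_one (n : ℕ) : poch 1 n = n ! := by
  rw [poch, Nat.factorial_eq_prod_range_add_one]
  push_cast
  simp only [add_comm]

lemma factorial_mul_poch_one_add (j t : ℕ) : (j ! : ℂ) * poch (1 + j) t = (j + t)! := by
  rw [← poch_one, ← poch_one, poch_add]

lemma neg_one_pow_mul_poch_neg_mul_factorial {m j : ℕ} (hj : j ≤ m) :
    (-1) ^ j * poch (-m) j * (m - j)! = m ! := by
  have hdesc : (-1) ^ j * poch (-m) j = m.descFactorial j := by
    nth_rw 1 [← card_range j]
    rw [poch, pow_card_mul_prod]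
    rw [Nat.descFactorial_eq_prod_range, Nat.cast_prod]
    refine prod_congr rfl fun s hs => ?_
    rw [Nat.cast_sub (by have := mem_range.mp hs; omega)]
    ring
  rw [hdesc, mul_comm, ← Nat.cast_mul, Nat.factorial_mul_descFactorial hj]

lemma poch_ne_zero {a : ℂ} (h : ∀ s : ℕ, a ≠ -s) (t : ℕ) : poch a t ≠ 0 :=
  prod_ne_zero_iff.mpr fun s _ hs => h s (eq_neg_of_add_eq_zero_left hs)

end Pochhammer

section Blocks

variable (d : ℕ) (α : ℕ → ℂ) (ρ : ℂ) {l : ℕ}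

/-- The element `(α_{k+1} + i - r)/l + 1` of the multiset `S(i)`, indexed by `kr = (k, r)`. -/
noncomputable def shiftedParam (l i : ℕ) (kr : ℕ × ℕ) : ℂ :=
  (alphaExt d α kr.1 + i - kr.2) / l + 1

lemma shiftedParam_self (l i : ℕ) : shiftedParam d α l i (d, i) = 1 := by
  simp [shiftedParam, alphaExt]

/-- Each factor `l(s+1) + i - r + α_{k+1}` of `gCoeff` is `l * (S_{k,r}(i) + s)`. -/
lemma gCoeff_eq_prod_shiftedParam (hl : l ≠ 0) {r : ℕ} (hr : r < l) (s i : ℕ) :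
    gCoeff d α ρ (l * s + i + 1 + (l - 1 - r)) =
      (l ^ (d + 1) * ρ) * ∏ k ∈ range (d + 1), (shiftedParam d α l i (k, r) + s) := by
  have hlC : (l : ℂ) ≠ 0 := Nat.cast_ne_zero.mpr hl
  nth_rw 1 [← card_range (d + 1)]
  rw [mul_comm _ ρ, mul_assoc, pow_card_mul_prod]
  rw [gCoeff]
  congr 1
  refine prod_congr rfl fun k _ => ?_
  rw [shiftedParam, Nat.cast_add, Nat.cast_sub (by omega), Nat.cast_sub (by omega)]
  field_simp
  push_cast
  ring

lemma prod_gCoeff_eq (hl : l ≠ 0) (s i : ℕ) :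
    ∏ u ∈ range l, gCoeff d α ρ (l * s + i + 1 + u) =
      (l ^ (d + 1) * ρ) ^ l * ∏ kr ∈ range (d + 1) ×ˢ range l, (shiftedParam d α l i kr + s) := by
  rw [← prod_range_reflect,
    prod_congr rfl fun r hr => gCoeff_eq_prod_shiftedParam d α ρ hl (mem_range.mp hr) s i,
    prod_mul_distrib, prod_const, card_range, prod_comm, prod_product]

lemma Gop_pow_X_pow_add_self (hl : l ≠ 0) (s i : ℕ) :
    (Gop d α ρ ^ l) ((X : ℂ[X]) ^ (l * s + i + l)) =
      ((l ^ (d + 1) * ρ) ^ l * ∏ kr ∈ range (d + 1) ×ˢ range l, (shiftedParam d α l i kr + s)) •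
        X ^ (l * s + i) := by
  rw [Gop_pow_X_pow_add, prod_gCoeff_eq d α ρ hl]

lemma Gop_pow_pow_X_pow (hl : l ≠ 0) (a t i : ℕ) :
    ((Gop d α ρ ^ l) ^ t) ((X : ℂ[X]) ^ (l * (a + t) + i)) =
      ((l ^ (d + 1) * ρ) ^ (l * t) *
        ∏ kr ∈ range (d + 1) ×ˢ range l, poch (shiftedParam d α l i kr + a) t) •
        X ^ (l * a + i) := by
  induction t with
  | zero => simp [poch]
  | succ t ih =>
    rw [pow_succ, Module.End.mul_apply, show l * (a + (t + 1)) + i = l * (a + t) + i + l by ring,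
      Gop_pow_X_pow_add_self d α ρ hl, map_smul, ih, smul_smul]
    simp only [poch_succ, prod_mul_distrib]
    push_cast
    ring_nf

end Blocks

lemma inv_factorial_mul_poch_eq {ι : Type*} (I : Finset ι) (S : ι → ℂ)
    (hS : ∀ β ∈ I, ∀ s : ℕ, S β ≠ -s) {η : ℂ} (hη : η ≠ 0) (l : ℕ) {m j : ℕ} (hj : j ≤ m) :
    ((m - j)! : ℂ)⁻¹ * (η ^ (l * (m - j)) * (poch (1 + j) (m - j) * ∏ β ∈ I, poch (S β + j) (m - j)))
      = (η ^ (m * l) * ∏ β ∈ I, poch (S β) m) *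
          (poch (-m) j / ((∏ β ∈ I, poch (S β) j) * j !)) * (-(η⁻¹ ^ l)) ^ j := by
  have hQ : ∏ β ∈ I, poch (S β) j ≠ 0 := prod_ne_zero_iff.mpr fun β hβ => poch_ne_zero (hS β hβ) j
  have hsplit : ∏ β ∈ I, poch (S β) m = (∏ β ∈ I, poch (S β) j) * ∏ β ∈ I, poch (S β + j) (m - j) := by
    rw [← prod_mul_distrib]
    exact prod_congr rfl fun β _ => by rw [← poch_add, Nat.add_sub_cancel' hj]
  have hasc := factorial_mul_poch_one_add j (m - j)
  have hdesc := neg_one_pow_mul_poch_neg_mul_factorial hj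
  rw [Nat.add_sub_cancel' hj] at hasc
  have hpow : η ^ (m * l) = η ^ (l * (m - j)) * (η ^ l) ^ j := by
    rw [← pow_mul, ← pow_add]
    congr 1
    rw [mul_comm m l, ← mul_add, Nat.sub_add_cancel hj]
  have hjf : (j ! : ℂ) ≠ 0 := Nat.cast_ne_zero.mpr j.factorial_ne_zero
  have hmjf : ((m - j)! : ℂ) ≠ 0 := Nat.cast_ne_zero.mpr (m - j).factorial_ne_zero
  rw [hsplit, hpow, neg_pow, inv_pow, inv_pow]
  field_simp
  linear_combination (∏ β ∈ I, poch (S β + j) (m - j)) * (hasc - hdesc)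

theorem stmt12_general (d : ℕ) (α : ℕ → ℂ) (ρ : ℂ) (hρ : ρ ≠ 0) (l : ℕ)
    (m i : ℕ) (hi : i < l) :
    let G := Gop d α ρ
    let η : ℂ := (l : ℂ) ^ (d + 1) * ρ
    let A : ℕ → ℂ := fun k => if k < d then α k else 0
    let S : ℕ × ℕ → ℂ := fun kr => (A kr.1 + i - kr.2) / (l : ℂ) + 1
    let Ihat : Finset (ℕ × ℕ) := (Finset.range (d + 1) ×ˢ Finset.range l).erase (d, i)
    (∀ kr ∈ Ihat, ∀ s : ℕ, S kr ≠ -(s : ℂ)) →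
    (∑ j ∈ Finset.range (m * l + i + 1),
        ((j.factorial : ℂ))⁻¹ • ((G ^ l) ^ j) (Polynomial.X ^ (m * l + i)))
      = (η ^ (m * l) * ∏ kr ∈ Ihat, poch (S kr) m) •
          (Polynomial.X ^ i *
            ∑ j ∈ Finset.range (m + 1),
              (poch (-(m : ℂ)) j
                  / ((∏ kr ∈ Ihat, poch (S kr) j) * (j.factorial : ℂ)))
                • ((-(η⁻¹ ^ l)) ^ j • Polynomial.X ^ (l * j))) := by
  intro G η A S Ihat hS
  have hl : l ≠ 0 := by omega
  have hη : η ≠ 0 := mul_ne_zero (pow_ne_zero _ (Nat.cast_ne_zero.mpr hl)) hρ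
  have hdi : (d, i) ∈ range (d + 1) ×ˢ range l := by simp [hi]
  have hvanish : ∀ j ∈ range (m * l + i + 1), j ∉ range (m + 1) →
      ((j ! : ℂ))⁻¹ • ((G ^ l) ^ j) ((X : ℂ[X]) ^ (m * l + i)) = 0 := fun j _ hj => by
    rw [← pow_mul, Gop_pow_X_pow_of_lt, smul_zero]
    simp only [mem_range, not_lt] at hj
    nlinarith
  -- after reflecting `j ↦ m - j`, the `j`-th terms of both sides are multiples of `x^(i + l j)`
  rw [← sum_subset (range_subset_range.mpr (by nlinarith)) hvanish, ← sum_range_reflect,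
    mul_sum, smul_sum]
  refine sum_congr rfl fun j hj => ?_
  have hjm : j ≤ m := Nat.lt_succ_iff.mp (mem_range.mp hj)
  rw [Nat.add_sub_cancel, show m * l + i = l * (j + (m - j)) + i by
      rw [Nat.add_sub_cancel' hjm, mul_comm], Gop_pow_pow_X_pow d α ρ hl, smul_smul,
    mul_smul_comm, mul_smul_comm, ← pow_add, smul_smul, smul_smul, add_comm i]
  congr 1
  rw [← insert_erase hdi, prod_insert (notMem_erase _ _), shiftedParam_self]
  exact inv_factorial_mul_poch_eq Ihat S hS hη l hjm

/-- Second hypergeometric representation for `q(G) = G^l`, continuous case: for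
`n = ml + i`, `0 ≤ i < l`, assuming no element of `Ŝ(i)` is a nonpositive integer,
`P_{ml+i} = η^{ml} x^i ∏_{β∈I}(S_β(i))_m · Σ_{j=0}^m (−m)_j/(∏_{β∈I}(S_β(i))_j j!) (−(x/η)^l)^j`. -/
theorem stmt12 (d : ℕ) (α : ℕ → ℂ) (ρ : ℂ) (hρ : ρ ≠ 0) (l : ℕ) (hl : 1 ≤ l)
    (m i : ℕ) (hi : i < l) :
    let G := Gop d α ρ
    let η : ℂ := (l : ℂ) ^ (d + 1) * ρ
    let A : ℕ → ℂ := fun k => if k < d then α k else 0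
    let S : ℕ × ℕ → ℂ := fun kr => (A kr.1 + i - kr.2) / (l : ℂ) + 1
    let Ihat : Finset (ℕ × ℕ) := (Finset.range (d + 1) ×ˢ Finset.range l).erase (d, i)
    (∀ kr ∈ Ihat, ∀ s : ℕ, S kr ≠ -(s : ℂ)) →
    (∑ j ∈ Finset.range (m * l + i + 1),
        ((j.factorial : ℂ))⁻¹ • ((G ^ l) ^ j) (Polynomial.X ^ (m * l + i)))
      = (η ^ (m * l) * ∏ kr ∈ Ihat, poch (S kr) m) •
          (Polynomial.X ^ i *
            ∑ j ∈ Finset.range (m + 1),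
              (poch (-(m : ℂ)) j
                  / ((∏ kr ∈ Ihat, poch (S kr) j) * (j.factorial : ℂ)))
                • ((-(η⁻¹ ^ l)) ^ j • Polynomial.X ^ (l * j))) :=
  stmt12_general d α ρ hρ l m i hi
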